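/- arXiv:1007.4695 — 2 statements merged into one kernel-verified Lean document; each statement's English description precedes it below -/
import Mathlib

section
/- The symmetric bilinear form Q on g = h ⊕ d ⊕ h* defined by Q((h1,x1,α1),(h2,x2,α2)) := ⟨h1,h2⟩_h + ⟨x1,x2⟩_d + α1(h2) + α2(h1) is nondegenerate and ad-invariant with respect to the double-extension bracket: Q([u,v],w) = −Q(v,[u,w]) for all u,v,w ∈ g. -/
/-!
Nondegeneracy: pairing `(h, x, α)` with `(0, 0, φ)`, `(0, y, 0)` and `(b, 0, 0)` gives `φ h`,
`⟨x, y⟩_d` and `⟨h, b⟩_h + α b`, so `h = 0` because `h*` separates `h`, then `x = 0` and `α = 0`.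
Invariance: after expanding both sides the terms cancel in pairs, by invariance of `⟨,⟩_h` and
`⟨,⟩_d`, skewness of `π(a)` and of the bracket of `h`; the one remaining pair,
`β(x, y)(c) = ⟨π(c)x, y⟩_d` against `⟨y, π(c)x⟩_d`, cancels by symmetry of `⟨,⟩_d`.
-/
open Module

variable {H D : Type} [LieRing H] [LieAlgebra ℝ H] [FiniteDimensional ℝ H]
  [LieRing D] [LieAlgebra ℝ D] [FiniteDimensional ℝ D]

/-- `beta BD π x y` is the element `β(x,y)` of `h*` given by `a ↦ ⟨π(a)x, y⟩_d`. -/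
def beta (BD : LinearMap.BilinForm ℝ D) (π : H →ₗ[ℝ] D →ₗ[ℝ] D) (x y : D) : Dual ℝ H :=
  (BD.flip y).comp (π.flip x)

/-- The double extension bracket on `g = h ⊕ d ⊕ h*`. -/
def dbr (BD : LinearMap.BilinForm ℝ D) (π : H →ₗ[ℝ] D →ₗ[ℝ] D)
    (u v : H × D × Dual ℝ H) : H × D × Dual ℝ H :=
  (⁅u.1, v.1⁆,
   ⁅u.2.1, v.2.1⁆ + π u.1 v.2.1 - π v.1 u.2.1,
   beta BD π u.2.1 v.2.1 - v.2.2.comp (LieAlgebra.ad ℝ H u.1)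
     + u.2.2.comp (LieAlgebra.ad ℝ H v.1))

/-- The symmetric bilinear form
`Q((h₁,x₁,α₁),(h₂,x₂,α₂)) = ⟨h₁,h₂⟩_h + ⟨x₁,x₂⟩_d + α₁(h₂) + α₂(h₁)` on `g`. -/
def Qde (BH : LinearMap.BilinForm ℝ H) (BD : LinearMap.BilinForm ℝ D)
    (u v : H × D × Dual ℝ H) : ℝ :=
  BH u.1 v.1 + BD u.2.1 v.2.1 + u.2.2 v.1 + v.2.2 u.1

section

variable {H D : Type} [LieRing H] [LieAlgebra ℝ H] [LieRing D] [LieAlgebra ℝ D]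
  (BH : LinearMap.BilinForm ℝ H) (BD : LinearMap.BilinForm ℝ D) (π : H →ₗ[ℝ] D →ₗ[ℝ] D)

@[simp]
theorem beta_apply (x y : D) (a : H) : beta BD π x y a = BD (π a x) y :=
  rfl

theorem eq_zero_of_forall_Qde_eq_zero (hBD : BD.SeparatingLeft) (u : H × D × Dual ℝ H)
    (hu : ∀ v, Qde BH BD u v = 0) : u = 0 := by
  obtain ⟨a, x, α⟩ := u
  have ha : a = 0 := (forall_dual_apply_eq_zero_iff ℝ a).mp fun φ => by
    simpa [Qde] using hu (0, 0, φ)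
  have hx : x = 0 := hBD x fun y => by simpa [Qde] using hu (0, y, 0)
  have hα : α = 0 := LinearMap.ext fun b => by simpa [Qde, ha] using hu (b, 0, 0)
  simp [ha, hx, hα]

theorem Qde_dbr_eq_neg_Qde_dbr (hBHinv : ∀ a b c : H, BH ⁅a, b⁆ c = - BH b ⁅a, c⁆)
    (hBDsymm : ∀ x y : D, BD x y = BD y x)
    (hBDinv : ∀ x y z : D, BD ⁅x, y⁆ z = - BD y ⁅x, z⁆)
    (hπskew : ∀ a : H, ∀ x y : D, BD (π a x) y = - BD x (π a y))
    (u v w : H × D × Dual ℝ H) :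
    Qde BH BD (dbr BD π u v) w = - Qde BH BD v (dbr BD π u w) := by
  obtain ⟨a, x, α⟩ := u
  obtain ⟨b, y, β⟩ := v
  obtain ⟨c, z, γ⟩ := w
  simp only [Qde, dbr, beta_apply, map_add, map_sub, LinearMap.add_apply, LinearMap.sub_apply,
    LinearMap.comp_apply, LieAlgebra.ad_apply]
  have hα : α ⁅c, b⁆ = -α ⁅b, c⁆ := by rw [← lie_skew, map_neg]
  linear_combination hBHinv a b c + hBDinv x y z + hπskew a y z + hBDsymm (π c x) y + hα

end

theorem double_extension_form_nondegenerate_ad_invariant_general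
    (BH : LinearMap.BilinForm ℝ H)
    (hBHinv : ∀ a b c : H, BH ⁅a, b⁆ c = - BH b ⁅a, c⁆)
    (BD : LinearMap.BilinForm ℝ D)
    (hBDsymm : ∀ x y : D, BD x y = BD y x)
    (hBDnd : BD.Nondegenerate)
    (hBDinv : ∀ x y z : D, BD ⁅x, y⁆ z = - BD y ⁅x, z⁆)
    (π : H →ₗ[ℝ] D →ₗ[ℝ] D)
    (hπskew : ∀ a : H, ∀ x y : D, BD (π a x) y = - BD x (π a y)) :
    -- nondegenerate
    (∀ u : H × D × Dual ℝ H, (∀ v : H × D × Dual ℝ H, Qde BH BD u v = 0) → u = 0) ∧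
    -- ad-invariant: Q([u,v],w) = −Q(v,[u,w])
    (∀ u v w : H × D × Dual ℝ H,
      Qde BH BD (dbr BD π u v) w = - Qde BH BD v (dbr BD π u w)) :=
  ⟨eq_zero_of_forall_Qde_eq_zero BH BD hBDnd.1,
    Qde_dbr_eq_neg_Qde_dbr BH BD π hBHinv hBDsymm hBDinv hπskew⟩

/-- The form `Q` is nondegenerate and ad-invariant for the double extension bracket. -/
theorem double_extension_form_nondegenerate_ad_invariant
    (BH : LinearMap.BilinForm ℝ H)
    (hBHsymm : ∀ a b : H, BH a b = BH b a)
    (hBHinv : ∀ a b c : H, BH ⁅a, b⁆ c = - BH b ⁅a, c⁆)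
    (BD : LinearMap.BilinForm ℝ D)
    (hBDsymm : ∀ x y : D, BD x y = BD y x)
    (hBDnd : BD.Nondegenerate)
    (hBDinv : ∀ x y z : D, BD ⁅x, y⁆ z = - BD y ⁅x, z⁆)
    (π : H →ₗ[ℝ] D →ₗ[ℝ] D)
    (hπder : ∀ a : H, ∀ x y : D, π a ⁅x, y⁆ = ⁅π a x, y⁆ + ⁅x, π a y⁆)
    (hπhom : ∀ a b : H, π ⁅a, b⁆ = π a ∘ₗ π b - π b ∘ₗ π a)
    (hπskew : ∀ a : H, ∀ x y : D, BD (π a x) y = - BD x (π a y)) :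
    -- nondegenerate
    (∀ u : H × D × Dual ℝ H, (∀ v : H × D × Dual ℝ H, Qde BH BD u v = 0) → u = 0) ∧
    -- ad-invariant: Q([u,v],w) = −Q(v,[u,w])
    (∀ u v w : H × D × Dual ℝ H,
      Qde BH BD (dbr BD π u v) w = - Qde BH BD v (dbr BD π u w)) :=
  double_extension_form_nondegenerate_ad_invariant_general BH hBHinv BD hBDsymm hBDnd hBDinv π
    hπskew
end

section
/- The bilinear map T on G(d) defined by T_u v := ½ λ^{-1}([λu, λv]_m) (where [·,·] is the double-extension bracket on g and u_m is the m-component along h) is given explicitly by T_{x1+ℓ(h1)}(x2+ℓ(h2)) = ½([x1,x2]_d + β(x1,x2) + π(h1)x2 − π(h2)x1) + ℓ([h1,h2]_h), and it satisfies T_u u = 0 and ⟨T_u v, w⟩ + ⟨v, T_u w⟩ = 0 for all u,v,w ∈ G(d). -/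
open Module

variable {H D : Type} [LieRing H] [LieAlgebra ℝ H] [FiniteDimensional ℝ H]
  [LieRing D] [LieAlgebra ℝ D] [FiniteDimensional ℝ D]

/-- The inverse of the isomorphism `ℓ : h → h*`, `ℓ(h) = ⟨h,·⟩_h`. -/
noncomputable def ellInv (BH : LinearMap.BilinForm ℝ H) (hBH : BH.Nondegenerate)
    (α : Dual ℝ H) : H :=
  (LinearMap.BilinForm.toDual BH hBH).symm α

/-- The metric on `G(d)`: `⟨x₁ + ℓ(h₁), x₂ + ℓ(h₂)⟩ = ⟨h₁,h₂⟩_h + ⟨x₁,x₂⟩_d`. -/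
noncomputable def gform (BH : LinearMap.BilinForm ℝ H) (hBH : BH.Nondegenerate)
    (BD : LinearMap.BilinForm ℝ D) (u v : D × Dual ℝ H) : ℝ :=
  BD u.1 v.1 + BH (ellInv BH hBH u.2) (ellInv BH hBH v.2)

/-- The map `λ : G(d) → m`, `λ(x + ℓ(h)) = (h, x, ℓ(h))`. -/
noncomputable def lam (BH : LinearMap.BilinForm ℝ H) (hBH : BH.Nondegenerate)
    (u : D × Dual ℝ H) : H × D × Dual ℝ H :=
  (ellInv BH hBH u.2, u.1, u.2)

/-- The projection of `g` onto `m = {(h,x,ℓ(h))}` along `h`. -/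
noncomputable def pmG (BH : LinearMap.BilinForm ℝ H) (hBH : BH.Nondegenerate)
    (w : H × D × Dual ℝ H) : H × D × Dual ℝ H :=
  (ellInv BH hBH w.2.2, w.2.1, w.2.2)

/-- The inverse of `λ` (defined on `m`): `λ⁻¹(h, x, ℓ(h)) = x + ℓ(h)`. -/
def lamInv (w : H × D × Dual ℝ H) : D × Dual ℝ H := (w.2.1, w.2.2)

/-- The tensor `T_u v = ½ λ⁻¹([λu, λv]_m)` on `G(d)`. -/
noncomputable def Tmap (BH : LinearMap.BilinForm ℝ H) (hBH : BH.Nondegenerate)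
    (BD : LinearMap.BilinForm ℝ D) (π : H →ₗ[ℝ] D →ₗ[ℝ] D)
    (u v : D × Dual ℝ H) : D × Dual ℝ H :=
  (2⁻¹ : ℝ) • lamInv (pmG BH hBH (dbr BD π (lam BH hBH u) (lam BH hBH v)))

lemma LinearMap.BilinForm.lieInvariant.apply_comp_ad {R L : Type*} [CommRing R] [LieRing L]
    [LieAlgebra R L] {B : LinearMap.BilinForm R L} (hB : B.lieInvariant L) (a b : L) :
    (B b).comp (LieAlgebra.ad R L a) = -B ⁅a, b⁆ := by
  ext c
  simp [hB a b c]

section DoubleExtension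

variable (BH : LinearMap.BilinForm ℝ H) (hBH : BH.Nondegenerate)
  (BD : LinearMap.BilinForm ℝ D) (π : H →ₗ[ℝ] D →ₗ[ℝ] D)

@[simp]
lemma ellInv_apply (h : H) : ellInv BH hBH (BH h) = h :=
  (BH.toDual hBH).symm_apply_apply h

@[simp]
lemma apply_ellInv (α : Dual ℝ H) : BH (ellInv BH hBH α) = α :=
  LinearMap.ext (BH.apply_toDual_symm_apply α)

lemma exists_eq_mk_apply (hBH : BH.Nondegenerate) {X : Type*} (u : X × Dual ℝ H) :
    ∃ x h, u = (x, BH h) :=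
  ⟨u.1, ellInv BH hBH u.2, by simp⟩

lemma gform_mk_apply_right (u : D × Dual ℝ H) (y : D) (k : H) :
    gform BH hBH BD u (y, BH k) = BD u.1 y + u.2 k := by
  simp [gform]

lemma gform_comm (hBHsymm : ∀ a b : H, BH a b = BH b a) (hBDsymm : ∀ x y : D, BD x y = BD y x)
    (u v : D × Dual ℝ H) : gform BH hBH BD u v = gform BH hBH BD v u := by
  simp only [gform, hBHsymm (ellInv BH hBH u.2), hBDsymm u.1]

lemma beta_self (hBDsymm : ∀ x y : D, BD x y = BD y x)
    (hπskew : ∀ a : H, ∀ x y : D, BD (π a x) y = - BD x (π a y)) (x : D) :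
    beta BD π x x = 0 := by
  ext a
  have h := hπskew a x x
  rw [hBDsymm x] at h
  exact CharZero.eq_neg_self_iff.mp h

lemma Tmap_mk_apply (hBHinv : BH.lieInvariant H) (x₁ x₂ : D) (h₁ h₂ : H) :
    Tmap BH hBH BD π (x₁, BH h₁) (x₂, BH h₂)
      = ((2⁻¹ : ℝ) • (⁅x₁, x₂⁆ + π h₁ x₂ - π h₂ x₁),
         (2⁻¹ : ℝ) • beta BD π x₁ x₂ + BH ⁅h₁, h₂⁆) := by
  simp only [Tmap, lam, ellInv_apply, dbr, pmG, lamInv, Prod.smul_mk, hBHinv.apply_comp_ad,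
    ← lie_skew h₁ h₂, map_neg]
  congr 1
  module

lemma Tmap_self (hBHinv : BH.lieInvariant H) (hBDsymm : ∀ x y : D, BD x y = BD y x)
    (hπskew : ∀ a : H, ∀ x y : D, BD (π a x) y = - BD x (π a y)) (u : D × Dual ℝ H) :
    Tmap BH hBH BD π u u = 0 := by
  obtain ⟨x, h, rfl⟩ := exists_eq_mk_apply BH hBH u
  simp [Tmap_mk_apply BH hBH BD π hBHinv, beta_self BD π hBDsymm hπskew]

lemma gform_Tmap_add_gform_Tmap (hBHsymm : ∀ a b : H, BH a b = BH b a)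
    (hBHinv : BH.lieInvariant H) (hBDsymm : ∀ x y : D, BD x y = BD y x)
    (hBDinv : BD.lieInvariant D) (hπskew : ∀ a : H, ∀ x y : D, BD (π a x) y = - BD x (π a y))
    (u v w : D × Dual ℝ H) :
    gform BH hBH BD (Tmap BH hBH BD π u v) w + gform BH hBH BD v (Tmap BH hBH BD π u w) = 0 := by
  obtain ⟨x₁, h₁, rfl⟩ := exists_eq_mk_apply BH hBH u
  obtain ⟨x₂, h₂, rfl⟩ := exists_eq_mk_apply BH hBH v
  obtain ⟨x₃, h₃, rfl⟩ := exists_eq_mk_apply BH hBH w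
  rw [gform_comm BH hBH BD hBHsymm hBDsymm (x₂, _), Tmap_mk_apply BH hBH BD π hBHinv,
    Tmap_mk_apply BH hBH BD π hBHinv, gform_mk_apply_right, gform_mk_apply_right]
  simp only [map_add, map_sub, map_smul, LinearMap.add_apply, LinearMap.sub_apply,
    LinearMap.smul_apply, smul_eq_mul, beta, LinearMap.comp_apply,
    LinearMap.flip_apply, LinearMap.BilinForm.flip_apply]
  linarith [hBDinv x₁ x₂ x₃, hBDsymm x₂ ⁅x₁, x₃⁆, hπskew h₁ x₂ x₃, hBDsymm x₂ (π h₁ x₃),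
    hBDsymm x₃ (π h₂ x₁), hBDsymm x₂ (π h₃ x₁), hBHinv h₁ h₂ h₃, hBHsymm h₂ ⁅h₁, h₃⁆]

end DoubleExtension

theorem Tmap_naturally_reductive_structure_general
    (BH : LinearMap.BilinForm ℝ H)
    (hBHsymm : ∀ a b : H, BH a b = BH b a)
    (hBHnd : BH.Nondegenerate)
    (hBHinv : ∀ a b c : H, BH ⁅a, b⁆ c = - BH b ⁅a, c⁆)
    (BD : LinearMap.BilinForm ℝ D)
    (hBDsymm : ∀ x y : D, BD x y = BD y x)
    (hBDinv : ∀ x y z : D, BD ⁅x, y⁆ z = - BD y ⁅x, z⁆)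
    (π : H →ₗ[ℝ] D →ₗ[ℝ] D)
    (hπskew : ∀ a : H, ∀ x y : D, BD (π a x) y = - BD x (π a y)) :
    -- explicit formula
    (∀ (x₁ x₂ : D) (h₁ h₂ : H),
      Tmap BH hBHnd BD π (x₁, BH h₁) (x₂, BH h₂)
        = ((2⁻¹ : ℝ) • (⁅x₁, x₂⁆ + π h₁ x₂ - π h₂ x₁),
           (2⁻¹ : ℝ) • beta BD π x₁ x₂ + BH ⁅h₁, h₂⁆)) ∧
    -- T_u u = 0
    (∀ u : D × Dual ℝ H, Tmap BH hBHnd BD π u u = 0) ∧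
    -- skew-symmetry: ⟨T_u v, w⟩ + ⟨v, T_u w⟩ = 0
    (∀ u v w : D × Dual ℝ H,
      gform BH hBHnd BD (Tmap BH hBHnd BD π u v) w
        + gform BH hBHnd BD v (Tmap BH hBHnd BD π u w) = 0) :=
  ⟨Tmap_mk_apply BH hBHnd BD π hBHinv,
    Tmap_self BH hBHnd BD π hBHinv hBDsymm hπskew,
    gform_Tmap_add_gform_Tmap BH hBHnd BD π hBHsymm hBHinv hBDsymm hBDinv hπskew⟩

/-- Theorem 3.4 (algebraic part): the tensor `T_u v = ½ λ⁻¹([λu,λv]_m)` is given explicitly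
by `T_{x₁+ℓ(h₁)}(x₂+ℓ(h₂)) = ½([x₁,x₂]_d + β(x₁,x₂) + π(h₁)x₂ − π(h₂)x₁) + ℓ([h₁,h₂]_h)`,
and satisfies `T_u u = 0` and `⟨T_u v, w⟩ + ⟨v, T_u w⟩ = 0`. -/
theorem Tmap_naturally_reductive_structure
    (BH : LinearMap.BilinForm ℝ H)
    (hBHsymm : ∀ a b : H, BH a b = BH b a)
    (hBHnd : BH.Nondegenerate)
    (hBHinv : ∀ a b c : H, BH ⁅a, b⁆ c = - BH b ⁅a, c⁆)
    (BD : LinearMap.BilinForm ℝ D)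
    (hBDsymm : ∀ x y : D, BD x y = BD y x)
    (hBDnd : BD.Nondegenerate)
    (hBDinv : ∀ x y z : D, BD ⁅x, y⁆ z = - BD y ⁅x, z⁆)
    (π : H →ₗ[ℝ] D →ₗ[ℝ] D)
    (hπder : ∀ a : H, ∀ x y : D, π a ⁅x, y⁆ = ⁅π a x, y⁆ + ⁅x, π a y⁆)
    (hπhom : ∀ a b : H, π ⁅a, b⁆ = π a ∘ₗ π b - π b ∘ₗ π a)
    (hπskew : ∀ a : H, ∀ x y : D, BD (π a x) y = - BD x (π a y)) :
    -- explicit formula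
    (∀ (x₁ x₂ : D) (h₁ h₂ : H),
      Tmap BH hBHnd BD π (x₁, BH h₁) (x₂, BH h₂)
        = ((2⁻¹ : ℝ) • (⁅x₁, x₂⁆ + π h₁ x₂ - π h₂ x₁),
           (2⁻¹ : ℝ) • beta BD π x₁ x₂ + BH ⁅h₁, h₂⁆)) ∧
    -- T_u u = 0
    (∀ u : D × Dual ℝ H, Tmap BH hBHnd BD π u u = 0) ∧
    -- skew-symmetry: ⟨T_u v, w⟩ + ⟨v, T_u w⟩ = 0
    (∀ u v w : D × Dual ℝ H,
      gform BH hBHnd BD (Tmap BH hBHnd BD π u v) w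
        + gform BH hBHnd BD v (Tmap BH hBHnd BD π u w) = 0) :=
  Tmap_naturally_reductive_structure_general BH hBHsymm hBHnd hBHinv BD hBDsymm hBDinv π hπskew
end
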